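/- arXiv:1003.2257 — 2 statements merged into one kernel-verified Lean document; each statement's English description precedes it below -/
import Mathlib

section
/- (Theorem 1) Let f be a positive differentiable probability density on (0,∞) with cumulative distribution function F, satisfying the regularity conditions: sup_{y>0} |f'(y)| ≤ μ for some μ > 0; the limit η = lim_{y→∞} (−f(y)/f'(y)) exists with 0 < η < ∞; ∫_0^∞ y f(y) dy < ∞; and lim_{y→∞} y·f(y) = 0. Fix a > 0. For each integer N ≥ 3, let L_{η/a}(N) be the unique positive solution of L·(1+L)^{N−1} = η/a, set ζ_{η/a}(N) = −log₂(L_{η/a}(N))/log₂(N), set r* = 1 + L_{η/a}(N), and take the geometric codebook y_n = a·(r*)^{n−1}, 1 ≤ n ≤ N. Define 𝒫 = Σ_{n=1}^{N} (F(y_{n+1}) − F(y_n))/y_n with y_{N+1} = ∞, as a function of y_2,...,y_N with y_1 = a fixed, and let ‖∇𝒫(N)‖ denote the Euclidean norm of its gradient at this codebook. Then there exists a function E : ℕ → ℝ such that for all N ≥ 3, ‖∇𝒫(N)‖ ≤ (1/2)·μ·N^{−(2ζ_{η/a}(N) − 1/2)} + E(N), and for every ε > 0, N^{3−ε}·E(N)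 → 0 as N → ∞. -/
open MeasureTheory Set Filter

/-- The geometric (uniform in dB) quantization levels `y n = a * r^(n-1)`. -/
noncomputable def quantLevels (a r : ℝ) (n : ℕ) : ℝ := a * r ^ (n - 1)

/-- The normalized average power `𝒫` regarded as a function of the single level
`y n` (substituted by `t`), with the other levels `y k` fixed and `F (y (N+1)) = 1`. -/
noncomputable def avgPowerFun (F : ℝ → ℝ) (N : ℕ) (y : ℕ → ℝ) (n : ℕ) (t : ℝ) : ℝ :=
  ∑ k ∈ Finset.Icc 1 N,
    ((if k = N then (1:ℝ) else F (if k + 1 = n then t else y (k + 1))) -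
        F (if k = n then t else y k)) /
      (if k = n then t else y k)

/-- Euclidean norm of the gradient of `𝒫` with respect to `y 2, …, y N`
(`y 1` being fixed). -/
noncomputable def gradNormP (F : ℝ → ℝ) (N : ℕ) (y : ℕ → ℝ) : ℝ :=
  Real.sqrt (∑ n ∈ Finset.Icc 2 N, (deriv (avgPowerFun F N y n) (y n)) ^ 2)

/-! On the geometric codebook, `y (n + 1) - y n = l * y n` with `l = L N`, so for `2 ≤ n < N` the
`n`-th partial derivative of `𝒫` is the Taylor remainder
`(f (y n) * (y (n + 1) - y n) - (F (y (n + 1)) - F (y n))) / y n ^ 2`, of size at most `μ l² / 2`.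
These `N - 2` components contribute at most `√N · μ l² / 2`, which is the main term. Since
`y N * l = η`, the last component is `(η f (y N) - (1 - F (y N))) / y N ^ 2`, and it is taken as
`E N`. The condition `-f / f' → η` makes `f` and the tail `1 - F` decay like `exp (-y / (2η))`,
while `l (1 + l)^(N - 1) = η / a` forces `(N - 1) l² ≤ η / a`, so `y N = η / l ≥ 8 η log N`
eventually; hence `E N = O(N⁻⁴)`. -/

open Real Topology

theorem hasDerivAt_avgPowerFun {F : ℝ → ℝ} {φ : ℝ} {N n : ℕ} {y : ℕ → ℝ}
    (hn : 2 ≤ n) (hnN : n ≤ N) (hy : y n ≠ 0) (hF : HasDerivAt F φ (y n)) :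
    HasDerivAt (avgPowerFun F N y n)
      (φ / y (n - 1) - (φ * y n + ((if n = N then 1 else F (y (n + 1))) - F (y n))) / y n ^ 2)
      (y n) := by
  set C : ℝ := if n = N then 1 else F (y (n + 1))
  set D : ℕ → ℝ := fun k =>
    if k = n - 1 then φ / y (n - 1)
    else if k = n then -((φ * y n + (C - F (y n))) / y n ^ 2) else 0
  have hterm : ∀ k ∈ Finset.Icc 1 N, HasDerivAt
      (fun t => ((if k = N then (1:ℝ) else F (if k + 1 = n then t else y (k + 1))) -
        F (if k = n then t else y k)) / (if k = n then t else y k)) (D k) (y n) := by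
    intro k hk
    rw [Finset.mem_Icc] at hk
    by_cases hk1 : k = n - 1
    · subst hk1
      simpa [D, show n - 1 + 1 = n by omega, show n - 1 ≠ n by omega,
        show n - 1 ≠ N by omega] using (hF.sub_const (F (y (n - 1)))).div_const (y (n - 1))
    by_cases hkn : k = n
    · subst hkn
      have h := (hF.const_sub C).fun_div (hasDerivAt_id' (y k)) hy
      simpa [D, hk1, C, show k + 1 ≠ k by omega, neg_div] using h.congr_deriv (by ring)
    · simpa [D, hk1, hkn, show k + 1 ≠ n by omega] using hasDerivAt_const (y n) _
  have hsum := HasDerivAt.fun_sum hterm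
  rw [Finset.sum_eq_add (n - 1) n (by omega) (fun k _ hk => by simp [D, hk.1, hk.2])
    (fun h => absurd (Finset.mem_Icc.2 ⟨by omega, by omega⟩) h)
    (fun h => absurd (Finset.mem_Icc.2 ⟨by omega, hnN⟩) h)] at hsum
  simp only [D, if_pos, if_neg (show n ≠ n - 1 by omega), ← sub_eq_add_neg] at hsum
  exact hsum

theorem quantLevels_pos {a r : ℝ} (ha : 0 < a) (hr : 0 < r) (n : ℕ) : 0 < quantLevels a r n :=
  mul_pos ha (pow_pos hr _)

theorem quantLevels_succ (a r : ℝ) {n : ℕ} (hn : 1 ≤ n) :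
    quantLevels a r (n + 1) = quantLevels a r n * r := by
  obtain ⟨m, rfl⟩ := Nat.exists_eq_add_of_le' hn
  simp [quantLevels, pow_succ, mul_assoc]

theorem deriv_avgPowerFun_quantLevels {F f : ℝ → ℝ} {a l : ℝ} {N n : ℕ}
    (ha : 0 < a) (hl : 0 < l) (hn : 2 ≤ n) (hnN : n ≤ N)
    (hF : HasDerivAt F (f (quantLevels a (1 + l) n)) (quantLevels a (1 + l) n)) :
    deriv (avgPowerFun F N (quantLevels a (1 + l)) n) (quantLevels a (1 + l) n) =
      (f (quantLevels a (1 + l) n) * (quantLevels a (1 + l) n * l) -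
        ((if n = N then 1 else F (quantLevels a (1 + l) (n + 1))) -
          F (quantLevels a (1 + l) n))) / quantLevels a (1 + l) n ^ 2 := by
  have hr : 0 < 1 + l := by linarith
  have hprev : quantLevels a (1 + l) n = quantLevels a (1 + l) (n - 1) * (1 + l) := by
    rw [← quantLevels_succ _ _ (by omega : 1 ≤ n - 1), Nat.sub_add_cancel (by omega)]
  have hy := quantLevels_pos ha hr (n - 1)
  rw [(hasDerivAt_avgPowerFun hn hnN (quantLevels_pos ha hr n).ne' hF).deriv, hprev]
  field_simp
  ring

theorem abs_sub_sub_mul_le {F f f' : ℝ → ℝ} {μ p q : ℝ} (hpq : p ≤ q)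
    (hF : ∀ x ∈ Icc p q, HasDerivAt F (f x) x) (hf : ∀ x ∈ Icc p q, HasDerivAt f (f' x) x)
    (hf' : ∀ x ∈ Icc p q, |f' x| ≤ μ) :
    |F q - F p - f p * (q - p)| ≤ μ * (q - p) ^ 2 / 2 := by
  have hslope : ∀ x ∈ Icc p q, |f x - f p| ≤ μ * (x - p) :=
    norm_image_sub_le_of_norm_deriv_right_le_segment
      (fun x hx => (hf x hx).continuousAt.continuousWithinAt)
      (fun x hx => (hf x (Ico_subset_Icc_self hx)).hasDerivWithinAt)
      (fun x hx => hf' x (Ico_subset_Icc_self hx))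
  have hrem : ∀ x ∈ Icc p q,
      HasDerivAt (fun x => F x - F p - f p * (x - p)) (f x - f p) x := fun x hx => by
    simpa using ((hF x hx).sub_const (F p)).fun_sub
      (((hasDerivAt_id' x).sub_const p).const_mul (f p))
  have hB : ∀ x, HasDerivAt (fun x => μ * (x - p) ^ 2 / 2) (μ * (x - p)) x := fun x =>
    ((((hasDerivAt_id' x).sub_const p).pow 2).const_mul μ |>.div_const 2).congr_deriv (by ring)
  exact image_norm_le_of_norm_deriv_right_le_deriv_boundary
    (fun x hx => (hrem x hx).continuousAt.continuousWithinAt)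
    (fun x hx => (hrem x (Ico_subset_Icc_self hx)).hasDerivWithinAt) (by simp) hB
    (fun x hx => hslope x (Ico_subset_Icc_self hx)) ⟨hpq, le_rfl⟩

theorem abs_deriv_avgPowerFun_quantLevels_le {F f f' : ℝ → ℝ} {μ a l : ℝ} {N n : ℕ}
    (ha : 0 < a) (hl : 0 < l) (hn : 2 ≤ n) (hnN : n < N)
    (hF : ∀ x ∈ Ioi 0, HasDerivAt F (f x) x) (hf : ∀ x ∈ Ioi 0, HasDerivAt f (f' x) x)
    (hf' : ∀ x ∈ Ioi 0, |f' x| ≤ μ) :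
    |deriv (avgPowerFun F N (quantLevels a (1 + l)) n) (quantLevels a (1 + l) n)| ≤
      μ * l ^ 2 / 2 := by
  set y := quantLevels a (1 + l)
  have hy : 0 < y n := quantLevels_pos ha (by linarith) n
  have hstep : y (n + 1) - y n = y n * l := by
    rw [show y (n + 1) = y n * (1 + l) from quantLevels_succ _ _ (by omega)]; ring
  have hsub : Icc (y n) (y (n + 1)) ⊆ Ioi 0 := fun x hx => hy.trans_le hx.1
  have htaylor := abs_sub_sub_mul_le (by nlinarith : y n ≤ y (n + 1))
    (fun x hx => hF x (hsub hx)) (fun x hx => hf x (hsub hx)) (fun x hx => hf' x (hsub hx))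
  rw [deriv_avgPowerFun_quantLevels ha hl hn hnN.le (hF _ hy), if_neg hnN.ne, ← hstep,
    abs_div, abs_of_pos (by positivity : 0 < y n ^ 2), div_le_iff₀ (by positivity), abs_sub_comm]
  calc _ ≤ μ * (y (n + 1) - y n) ^ 2 / 2 := by simpa using htaylor
    _ = μ * l ^ 2 / 2 * y n ^ 2 := by rw [hstep]; ring

theorem sqrt_sum_sq_le {d : ℕ → ℝ} {N : ℕ} {B : ℝ} (hN : 2 ≤ N) (hB0 : 0 ≤ B)
    (hB : ∀ n ∈ Finset.Ico 2 N, |d n| ≤ B) :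
    √(∑ n ∈ Finset.Icc 2 N, d n ^ 2) ≤ √N * B + |d N| := by
  have hbulk : ∑ n ∈ Finset.Ico 2 N, d n ^ 2 ≤ N * B ^ 2 :=
    calc _ ≤ ∑ n ∈ Finset.Ico 2 N, B ^ 2 := Finset.sum_le_sum fun n hn => by
          rw [← sq_abs]; exact pow_le_pow_left₀ (abs_nonneg _) (hB n hn) 2
      _ ≤ N * B ^ 2 := by
          rw [Finset.sum_const, Nat.card_Ico, nsmul_eq_mul]
          gcongr
          exact_mod_cast Nat.sub_le N 2
  rw [← Finset.Ico_add_one_right_eq_Icc, Finset.sum_Ico_succ_top hN, sqrt_le_left (by positivity)]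
  have hcross : 0 ≤ √N * B * |d N| := by positivity
  nlinarith [sq_sqrt (Nat.cast_nonneg N : (0:ℝ) ≤ N), sq_abs (d N)]

theorem gradNormP_quantLevels_le {F f f' : ℝ → ℝ} {μ a l : ℝ} {N : ℕ}
    (hμ : 0 ≤ μ) (ha : 0 < a) (hl : 0 < l) (hN : 2 ≤ N)
    (hF : ∀ x ∈ Ioi 0, HasDerivAt F (f x) x) (hf : ∀ x ∈ Ioi 0, HasDerivAt f (f' x) x)
    (hf' : ∀ x ∈ Ioi 0, |f' x| ≤ μ) :
    gradNormP F N (quantLevels a (1 + l)) ≤ √N * (μ * l ^ 2 / 2) +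
      |deriv (avgPowerFun F N (quantLevels a (1 + l)) N) (quantLevels a (1 + l) N)| :=
  sqrt_sum_sq_le hN (by positivity) fun _ hn =>
    abs_deriv_avgPowerFun_quantLevels_le ha hl (Finset.mem_Ico.1 hn).1 (Finset.mem_Ico.1 hn).2
      hF hf hf'

theorem rpow_zeta_exponent_eq {x l : ℝ} (hx0 : 0 < x) (hx1 : x ≠ 1) (hl : 0 < l) :
    x ^ (-(2 * (-logb 2 l / logb 2 x) - 1 / 2)) = √x * l ^ 2 := by
  have hlogx : log x ≠ 0 := log_ne_zero_of_pos_of_ne_one hx0 hx1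
  have hlog2 : log 2 ≠ 0 := by positivity
  have hexp : -(2 * (-logb 2 l / logb 2 x) - 1 / 2) = logb x l * 2 + 1 / 2 := by
    simp only [logb]; field_simp; ring
  rw [hexp, rpow_add hx0, rpow_mul hx0.le, rpow_logb hx0 hx1 hl, ← sqrt_eq_rpow, rpow_two,
    mul_comm]

theorem le_mul_exp_of_deriv_le_neg_mul {f f' : ℝ → ℝ} {κ T : ℝ}
    (hf : ∀ x ∈ Ici T, HasDerivAt f (f' x) x) (hf' : ∀ x ∈ Ici T, f' x ≤ -κ * f x)
    {y : ℝ} (hy : T ≤ y) : f y ≤ f T * exp (-κ * (y - T)) := by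
  have hg : ∀ x ∈ Ici T, HasDerivAt (fun x => f x * exp (κ * (x - T)))
      ((f' x + κ * f x) * exp (κ * (x - T))) x := fun x hx =>
    ((hf x hx).mul (((hasDerivAt_id' x).sub_const T).const_mul κ).exp).congr_deriv (by ring)
  have hanti : AntitoneOn (fun x => f x * exp (κ * (x - T))) (Ici T) := by
    refine antitoneOn_of_hasDerivWithinAt_nonpos (convex_Ici T)
      (fun x hx => (hg x hx).continuousAt.continuousWithinAt)
      (fun x hx => (hg x (interior_subset hx)).hasDerivWithinAt) fun x hx => ?_
    have := hf' x (interior_subset hx)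
    exact mul_nonpos_of_nonpos_of_nonneg (by linarith) (exp_pos _).le
  have h := hanti self_mem_Ici hy hy
  simp only [sub_self, mul_zero, exp_zero, mul_one] at h
  calc f y = f y * exp (κ * (y - T)) * exp (-κ * (y - T)) := by
        rw [mul_assoc, ← exp_add, neg_mul, add_neg_cancel, exp_zero, mul_one]
    _ ≤ f T * exp (-κ * (y - T)) := by gcongr

theorem setIntegral_Ioi_le_of_le_exp {f : ℝ → ℝ} {C κ y : ℝ} (hκ : 0 < κ)
    (hf : IntegrableOn f (Ioi y)) (hle : ∀ t ∈ Ioi y, f t ≤ C * exp (-κ * t)) :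
    ∫ t in Ioi y, f t ≤ C / κ * exp (-κ * y) := by
  have hexp := integrableOn_exp_mul_Ioi (neg_neg_iff_pos.2 hκ) y
  calc ∫ t in Ioi y, f t ≤ ∫ t in Ioi y, C * exp (-κ * t) :=
        setIntegral_mono_on hf (hexp.const_mul C) measurableSet_Ioi hle
    _ = C / κ * exp (-κ * y) := by
        rw [integral_const_mul, integral_exp_mul_Ioi (neg_neg_iff_pos.2 hκ)]
        field_simp

theorem one_sub_eq_setIntegral_Ioi {f F : ℝ → ℝ} (hfint : IntegrableOn f (Ioi 0))
    (hfone : ∫ x in Ioi (0:ℝ), f x = 1) (hF : ∀ x, F x = ∫ t in Ioc (0:ℝ) x, f t) {y : ℝ}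
    (hy : 0 ≤ y) : 1 - F y = ∫ t in Ioi y, f t := by
  have hU : Ioc 0 y ∪ Ioi y = Ioi 0 := Ioc_union_Ioi_eq_Ioi hy
  rw [hF y, ← hfone, ← hU, setIntegral_union (Ioc_disjoint_Ioi le_rfl) measurableSet_Ioi
    (hfint.mono_set (hU ▸ subset_union_left)) (hfint.mono_set (hU ▸ subset_union_right))]
  ring

theorem eventually_deriv_le_of_tendsto_neg_div {f f' : ℝ → ℝ} {η : ℝ} (hη : 0 < η)
    (hfpos : ∀ x ∈ Ioi 0, 0 < f x) (hlim : Tendsto (fun y => -f y / f' y) atTop (𝓝 η)) :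
    ∀ᶠ y in atTop, f' y ≤ -(2 * η)⁻¹ * f y := by
  filter_upwards [hlim.eventually (Ioo_mem_nhds hη (by linarith : η < 2 * η)),
    eventually_gt_atTop 0] with y ⟨hratio0, hratio⟩ hy
  have hfy := hfpos y hy
  have hf'y : f' y < 0 := by
    by_contra! h
    exact (div_nonpos_of_nonpos_of_nonneg (neg_nonpos.2 hfy.le) h).not_gt hratio0
  rw [div_lt_iff_of_neg hf'y] at hratio
  rw [neg_mul, ← div_eq_inv_mul, le_neg, div_le_iff₀ (by positivity)]
  linarith

theorem exists_abs_mul_sub_tail_le {f f' F : ℝ → ℝ} {η : ℝ} (hη : 0 < η)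
    (hfpos : ∀ x ∈ Ioi 0, 0 < f x) (hfder : ∀ x ∈ Ioi 0, HasDerivAt f (f' x) x)
    (hfint : IntegrableOn f (Ioi 0)) (hfone : ∫ x in Ioi (0:ℝ), f x = 1)
    (hlim : Tendsto (fun y => -f y / f' y) atTop (𝓝 η))
    (hF : ∀ x, F x = ∫ t in Ioc (0:ℝ) x, f t) :
    ∃ C T : ℝ, ∀ y, T ≤ y → |η * f y - (1 - F y)| ≤ C * exp (-(2 * η)⁻¹ * y) := by
  set κ := (2 * η)⁻¹
  have hκ : 0 < κ := by positivity
  obtain ⟨T, hT⟩ := eventually_atTop.1 ((eventually_deriv_le_of_tendsto_neg_div hη hfpos hlim).and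
    (eventually_gt_atTop 0))
  have hT0 : 0 < T := (hT T le_rfl).2
  set c := f T * exp (κ * T)
  have hdecay : ∀ y, T ≤ y → f y ≤ c * exp (-κ * y) := fun y hy => by
    calc f y ≤ f T * exp (-κ * (y - T)) := le_mul_exp_of_deriv_le_neg_mul
          (fun x hx => hfder x (hT0.trans_le hx)) (fun x hx => (hT x hx).1) hy
      _ = c * exp (-κ * y) := by rw [mul_assoc, ← exp_add]; ring_nf
  refine ⟨η * c + c / κ, T, fun y hy => ?_⟩
  have hy0 : 0 < y := hT0.trans_le hy
  have htail : 1 - F y = ∫ t in Ioi y, f t := one_sub_eq_setIntegral_Ioi hfint hfone hF hy0.le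
  have htail0 : 0 ≤ 1 - F y := htail ▸ setIntegral_nonneg measurableSet_Ioi
    fun t ht => (hfpos t (hy0.trans ht)).le
  have htail_le : 1 - F y ≤ c / κ * exp (-κ * y) := htail ▸ setIntegral_Ioi_le_of_le_exp hκ
    (hfint.mono_set fun t ht => hy0.trans ht) fun t ht => hdecay t (hy.trans (le_of_lt ht))
  have hfy := hfpos y hy0
  have hfy_le := hdecay y hy
  rw [abs_le]
  constructor <;> nlinarith

theorem mul_sq_le_of_mul_one_add_pow_eq {l c : ℝ} {m : ℕ} (hl : 0 < l)
    (h : l * (1 + l) ^ m = c) : m * l ^ 2 ≤ c := by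
  have hbernoulli := one_add_mul_le_pow (by linarith : (-2:ℝ) ≤ l) m
  rw [← h]
  nlinarith

theorem eventually_log_mul_le_one {L : ℕ → ℝ} {c : ℝ} (hc : 0 < c)
    (hL : ∀ᶠ N : ℕ in atTop, 0 < L N ∧ L N * (1 + L N) ^ (N - 1) = c) :
    ∀ᶠ N : ℕ in atTop, 8 * log N * L N ≤ 1 := by
  have hlog : ∀ᶠ N : ℕ in atTop, log N ^ 2 ≤ (128 * c)⁻¹ * N := by
    filter_upwards [((isLittleO_pow_log_id_atTop (n := 2)).comp_tendsto
      tendsto_natCast_atTop_atTop).bound (by positivity : 0 < (128 * c)⁻¹)] with N hN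
    simpa using hN
  filter_upwards [hL, hlog, eventually_ge_atTop 2] with N ⟨hl, heq⟩ hN hN2
  have hsq := mul_sq_le_of_mul_one_add_pow_eq hl heq
  have hN2' : (2:ℝ) ≤ N := by exact_mod_cast hN2
  rw [Nat.cast_sub (by omega), Nat.cast_one] at hsq
  have hlog0 : 0 ≤ log N := log_nonneg (by linarith)
  rw [← pow_le_one_iff_of_nonneg (by positivity) two_ne_zero]
  have : 128 * c * log N ^ 2 ≤ N := by
    rwa [le_inv_mul_iff₀ (by positivity)] at hN
  nlinarith [sq_nonneg (L N)]

theorem quantLevels_mul_eq {a l c : ℝ} {N : ℕ} (ha : 0 < a)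
    (h : l * (1 + l) ^ (N - 1) = c / a) : quantLevels a (1 + l) N * l = c := by
  rw [quantLevels, mul_assoc, mul_comm _ l, h]
  field_simp

theorem eventually_abs_deriv_avgPowerFun_last_le {F f : ℝ → ℝ} {C T η a : ℝ} {L : ℕ → ℝ}
    (hη : 0 < η) (ha : 0 < a) (hF : ∀ x ∈ Ioi 0, HasDerivAt F (f x) x)
    (htail : ∀ y, T ≤ y → |η * f y - (1 - F y)| ≤ C * exp (-(2 * η)⁻¹ * y))
    (hL : ∀ N : ℕ, 3 ≤ N → 0 < L N ∧ L N * (1 + L N) ^ (N - 1) = η / a) :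
    ∀ᶠ N : ℕ in atTop,
      |deriv (avgPowerFun F N (quantLevels a (1 + L N)) N) (quantLevels a (1 + L N) N)| ≤
        C / N ^ 4 := by
  have hlogL := eventually_log_mul_le_one (by positivity) (eventually_atTop.2 ⟨3, hL⟩)
  have hlarge : ∀ᶠ N : ℕ in atTop, max T 1 ≤ 8 * η * log N :=
    ((tendsto_log_atTop.comp tendsto_natCast_atTop_atTop).const_mul_atTop
      (by positivity)).eventually_ge_atTop _
  filter_upwards [hlogL, hlarge, eventually_ge_atTop 3] with N hlogN hTN hN
  obtain ⟨hl, heq⟩ := hL N hN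
  set y := quantLevels a (1 + L N) N
  have hy0 : 0 < y := quantLevels_pos ha (by linarith) N
  have hyl : y * L N = η := quantLevels_mul_eq ha heq
  have hy : 8 * η * log N ≤ y := by nlinarith
  have hexp : exp (-(2 * η)⁻¹ * y) ≤ 1 / N ^ 4 := by
    rw [one_div, ← exp_log (by positivity : (0:ℝ) < N ^ 4), ← exp_neg, log_pow, exp_le_exp,
      neg_mul, neg_le_neg_iff, le_inv_mul_iff₀ (by positivity)]
    push_cast
    linarith
  have hbound := htail y (by linarith [le_max_left T 1])
  rw [deriv_avgPowerFun_quantLevels ha hl (by omega) le_rfl (hF y hy0), if_pos rfl, hyl,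
    mul_comm (f y), abs_div, abs_of_pos (by positivity : 0 < y ^ 2)]
  have hC : 0 ≤ C := (mul_nonneg_iff_of_pos_right (exp_pos _)).1 ((abs_nonneg _).trans hbound)
  calc _ ≤ |η * f y - (1 - F y)| :=
        div_le_self (abs_nonneg _) (one_le_pow₀ (by linarith [le_max_right T 1]))
    _ ≤ C * (1 / N ^ 4) := hbound.trans (mul_le_mul_of_nonneg_left hexp hC)
    _ = C / N ^ 4 := by ring

theorem tendsto_rpow_mul_of_le_div_pow {e : ℕ → ℝ} {C s : ℝ} {k : ℕ} (hs : s < k)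
    (he0 : ∀ N, 0 ≤ e N) (he : ∀ᶠ N : ℕ in atTop, e N ≤ C / N ^ k) :
    Tendsto (fun N : ℕ => (N : ℝ) ^ s * e N) atTop (𝓝 0) := by
  have hlim : Tendsto (fun N : ℕ => C * (N : ℝ) ^ (-(k - s))) atTop (𝓝 0) := by
    simpa using ((tendsto_rpow_neg_atTop (by linarith : 0 < (k : ℝ) - s)).comp
      tendsto_natCast_atTop_atTop).const_mul C
  refine squeeze_zero' (Eventually.of_forall fun N =>
    mul_nonneg (rpow_nonneg (Nat.cast_nonneg N) _) (he0 N)) ?_ hlim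
  filter_upwards [he, eventually_gt_atTop 0] with N hN hN0
  have hN0' : (0 : ℝ) < N := by exact_mod_cast hN0
  calc (N : ℝ) ^ s * e N ≤ N ^ s * (C / N ^ k) := by gcongr
    _ = C * N ^ (-(k - s)) := by rw [neg_sub, rpow_sub hN0', rpow_natCast]; ring

theorem stmt7_general
    (f f' F : ℝ → ℝ) (μ η a : ℝ)
    (hμ : 0 < μ) (hη0 : 0 < η) (ha : 0 < a)
    (hfpos : ∀ x ∈ Ioi (0:ℝ), 0 < f x)
    (hfder : ∀ x ∈ Ioi (0:ℝ), HasDerivAt f (f' x) x)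
    (hf'bd : ∀ x ∈ Ioi (0:ℝ), |f' x| ≤ μ)
    (hfint : IntegrableOn f (Ioi 0))
    (hfone : ∫ x in Ioi (0:ℝ), f x = 1)
    (hηlim : Tendsto (fun y : ℝ => -f y / f' y) atTop (nhds η))
    (hF : ∀ x, F x = ∫ t in Ioc (0:ℝ) x, f t)
    (hF' : ∀ x ∈ Ioi (0:ℝ), HasDerivAt F (f x) x)
    (L : ℕ → ℝ)
    (hL : ∀ N : ℕ, 3 ≤ N → 0 < L N ∧ L N * (1 + L N) ^ (N - 1) = η / a) :
    ∃ E : ℕ → ℝ,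
      (∀ N : ℕ, 3 ≤ N →
        gradNormP F N (quantLevels a (1 + L N)) ≤
          1 / 2 * μ *
              (N : ℝ) ^ (-(2 * (-Real.logb 2 (L N) / Real.logb 2 N) - 1 / 2)) +
            E N) ∧
      ∀ ε : ℝ, 0 < ε →
        Tendsto (fun N : ℕ => (N : ℝ) ^ ((3:ℝ) - ε) * E N) atTop (nhds 0) := by
  refine ⟨fun N => |deriv (avgPowerFun F N (quantLevels a (1 + L N)) N)
    (quantLevels a (1 + L N) N)|, fun N hN => ?_, fun ε hε => ?_⟩
  · have hl := (hL N hN).1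
    have hN1 : (1 : ℝ) < N := by exact_mod_cast (by omega : 1 < N)
    rw [rpow_zeta_exponent_eq (by linarith) hN1.ne' hl]
    calc _ ≤ √N * (μ * L N ^ 2 / 2) + _ :=
          gradNormP_quantLevels_le hμ.le ha hl (by omega) hF' hfder hf'bd
      _ = _ := by ring
  · obtain ⟨C, T, htail⟩ := exists_abs_mul_sub_tail_le hη0 hfpos hfder hfint hfone hηlim hF
    exact tendsto_rpow_mul_of_le_div_pow (k := 4) (by push_cast; linarith)
      (fun N => abs_nonneg _) (eventually_abs_deriv_avgPowerFun_last_le hη0 ha hF' htail hL)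

/-- Theorem 1: for the optimal uniform (in dB) codebook
`y n = a·(1 + L_{η/a}(N))^(n-1)`, the gradient of the normalized average power
satisfies `‖∇𝒫(N)‖ ≤ (1/2)·μ·N^{−(2ζ_{η/a}(N) − 1/2)} + E(N)` with
`N^{3−ε}·E(N) → 0` for every `ε > 0`. -/
theorem stmt7
    (f f' F : ℝ → ℝ) (μ η a : ℝ)
    (hμ : 0 < μ) (hη0 : 0 < η) (ha : 0 < a)
    (hfpos : ∀ x ∈ Ioi (0:ℝ), 0 < f x)
    (hfder : ∀ x ∈ Ioi (0:ℝ), HasDerivAt f (f' x) x)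
    (hf'bd : ∀ x ∈ Ioi (0:ℝ), |f' x| ≤ μ)
    (hfint : IntegrableOn f (Ioi 0))
    (hfone : ∫ x in Ioi (0:ℝ), f x = 1)
    (hmean : IntegrableOn (fun y : ℝ => y * f y) (Ioi 0))
    (hηlim : Tendsto (fun y : ℝ => -f y / f' y) atTop (nhds η))
    (hyf : Tendsto (fun y : ℝ => y * f y) atTop (nhds 0))
    (hF : ∀ x, F x = ∫ t in Ioc (0:ℝ) x, f t)
    (hF' : ∀ x ∈ Ioi (0:ℝ), HasDerivAt F (f x) x)
    (L : ℕ → ℝ)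
    (hL : ∀ N : ℕ, 3 ≤ N → 0 < L N ∧ L N * (1 + L N) ^ (N - 1) = η / a) :
    ∃ E : ℕ → ℝ,
      (∀ N : ℕ, 3 ≤ N →
        gradNormP F N (quantLevels a (1 + L N)) ≤
          1 / 2 * μ *
              (N : ℝ) ^ (-(2 * (-Real.logb 2 (L N) / Real.logb 2 N) - 1 / 2)) +
            E N) ∧
      ∀ ε : ℝ, 0 < ε →
        Tendsto (fun N : ℕ => (N : ℝ) ^ ((3:ℝ) - ε) * E N) atTop (nhds 0) :=
  stmt7_general f f' F μ η a hμ hη0 ha hfpos hfder hf'bd hfint hfone hηlim hF hF' L hL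
end

section
/- (Theorem 2) Let f be a positive differentiable probability density on (0,∞) with cumulative distribution function F, satisfying the regularity conditions: the limit η = lim_{y→∞} (−f(y)/f'(y)) exists with 0 < η < ∞, and m := ∫_0^∞ y f(y) dy < ∞. Suppose also ρ := ∫_0^∞ (1/y)·f(y) dy < ∞. Fix a > 0 and an integer N ≥ 2. Let L_{η/a}(N) be the unique positive solution of L·(1+L)^{N−1} = η/a, set ζ = ζ_{η/a}(N) = −log₂(L_{η/a}(N))/log₂(N), r* = 1 + L_{η/a}(N), and take the codebook y_n = a·(r*)^{n−1}, 1 ≤ n ≤ N. Then the normalized average power of this codebook satisfies Σ_{n=1}^{N} (F(y_{n+1}) − F(y_n))/y_n < ρ·(1 + N^{−ζ} + ω·N^{−2ζ}), where y_{N+1} = ∞ and ω = m/(η²·ρ). -/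
/-!
On a cell `[y, r y]` of a geometric codebook `1 / y ≤ r / t`, so the cell contributes at most
`r · ∫ f t / t` over the cell, and the `N - 1` bounded cells together contribute strictly less
than `r ρ` (strictly, because the mass of `f t / t` below `y₁ = a` is missed). The unbounded last
cell `[y_N, ∞)` is controlled by the Markov-type bound `(1 - F u) / u ≤ m / u²`. For `r = 1 + L`
the equation defining `L` says exactly `L · y_N = η`, and `N ^ (-ζ) = L`.
-/

open MeasureTheory Set Filter

lemma intervalIntegrable_of_integrableOn_Ioi_zero {g : ℝ → ℝ} (hg : IntegrableOn g (Ioi 0))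
    {u v : ℝ} (hu : 0 ≤ u) (hv : 0 ≤ v) : IntervalIntegrable g volume u v :=
  intervalIntegrable_iff.2 <| hg.mono_set fun _ ht => (le_min hu hv).trans_lt ht.1

lemma intervalIntegral_lt_integral_Ioi_zero {g : ℝ → ℝ} (hg : IntegrableOn g (Ioi 0))
    (hg0 : ∀ t ∈ Ioi (0:ℝ), 0 < g t) {u v : ℝ} (hu : 0 < u) (huv : u ≤ v) :
    ∫ t in u..v, g t < ∫ t in Ioi 0, g t := by
  have hgu : IntegrableOn g (Ioi u) := hg.mono_set (Ioi_subset_Ioi hu.le)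
  have hhead : 0 < ∫ t in 0..u, g t :=
    intervalIntegral.intervalIntegral_pos_of_pos_on
      (intervalIntegrable_of_integrableOn_Ioi_zero hg le_rfl hu.le) (fun t ht => hg0 t ht.1) hu
  have hrest : ∫ t in u..v, g t ≤ ∫ t in Ioi u, g t := by
    rw [intervalIntegral.integral_of_le huv]
    exact setIntegral_mono_set hgu
      (ae_restrict_of_forall_mem measurableSet_Ioi fun t ht => (hg0 t (hu.trans ht)).le)
      Ioc_subset_Ioi_self.eventuallyLE
  rw [← intervalIntegral.integral_interval_add_Ioi hg hgu]
  linarith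

lemma intervalIntegral_div_le_mul_intervalIntegral_inv_mul {f : ℝ → ℝ} {u v r : ℝ}
    (hu : 0 < u) (huv : u ≤ v) (hvr : v ≤ r * u) (hf0 : ∀ t ∈ Icc u v, 0 ≤ f t)
    (hf : IntervalIntegrable f volume u v)
    (hg : IntervalIntegrable (fun t => 1 / t * f t) volume u v) :
    (∫ t in u..v, f t) / u ≤ r * ∫ t in u..v, 1 / t * f t := by
  rw [← intervalIntegral.integral_div, ← intervalIntegral.integral_const_mul]
  refine intervalIntegral.integral_mono_on huv (hf.div_const u) (hg.const_mul r) fun t ht => ?_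
  have ht0 : 0 < t := hu.trans_le ht.1
  have hft := hf0 t ht
  rw [div_le_iff₀ hu]
  calc f t = 1 / t * f t * t := by field_simp
    _ ≤ 1 / t * f t * (r * u) := by gcongr; exact ht.2.trans hvr
    _ = r * (1 / t * f t) * u := by ring

lemma setIntegral_Ioi_div_le_integral_mul_div_sq {f : ℝ → ℝ} (hf0 : ∀ t ∈ Ioi (0:ℝ), 0 ≤ f t)
    (hf : IntegrableOn f (Ioi 0)) (hm : IntegrableOn (fun t => t * f t) (Ioi 0))
    {u : ℝ} (hu : 0 < u) :
    (∫ t in Ioi u, f t) / u ≤ (∫ t in Ioi 0, t * f t) / u ^ 2 := by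
  have hsub : Ioi u ⊆ Ioi 0 := Ioi_subset_Ioi hu.le
  calc (∫ t in Ioi u, f t) / u = ∫ t in Ioi u, f t / u := (integral_div _ _).symm
    _ ≤ ∫ t in Ioi u, t * f t / u ^ 2 := by
      refine setIntegral_mono_on ((hf.mono_set hsub).div_const _)
        ((hm.mono_set hsub).div_const _) measurableSet_Ioi fun t ht => ?_
      have hft := hf0 t (hsub ht)
      calc f t / u = u * f t / u ^ 2 := by field_simp
        _ ≤ t * f t / u ^ 2 := by gcongr; exact (mem_Ioi.1 ht).le
    _ = (∫ t in Ioi u, t * f t) / u ^ 2 := integral_div _ _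
    _ ≤ (∫ t in Ioi 0, t * f t) / u ^ 2 := by
      refine div_le_div_of_nonneg_right ?_ (sq_nonneg u)
      exact setIntegral_mono_set hm
        (ae_restrict_of_forall_mem measurableSet_Ioi fun t ht => mul_nonneg ht.le (hf0 t ht))
        hsub.eventuallyLE

section CDF

variable {f F : ℝ → ℝ}

lemma cdf_eq_intervalIntegral (hF : ∀ x, F x = ∫ t in Ioc (0:ℝ) x, f t) {x : ℝ} (hx : 0 ≤ x) :
    F x = ∫ t in 0..x, f t := by
  rw [hF, intervalIntegral.integral_of_le hx]

lemma cdf_sub_cdf (hF : ∀ x, F x = ∫ t in Ioc (0:ℝ) x, f t) (hf : IntegrableOn f (Ioi 0))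
    {u v : ℝ} (hu : 0 ≤ u) (hv : 0 ≤ v) : F v - F u = ∫ t in u..v, f t := by
  rw [cdf_eq_intervalIntegral hF hv, cdf_eq_intervalIntegral hF hu,
    intervalIntegral.integral_interval_sub_left
      (intervalIntegrable_of_integrableOn_Ioi_zero hf le_rfl hv)
      (intervalIntegrable_of_integrableOn_Ioi_zero hf le_rfl hu)]

lemma one_sub_cdf (hF : ∀ x, F x = ∫ t in Ioc (0:ℝ) x, f t) (hf : IntegrableOn f (Ioi 0))
    (hf1 : ∫ t in Ioi (0:ℝ), f t = 1) {u : ℝ} (hu : 0 ≤ u) :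
    1 - F u = ∫ t in Ioi u, f t := by
  rw [← hf1, cdf_eq_intervalIntegral hF hu,
    ← intervalIntegral.integral_interval_add_Ioi hf (hf.mono_set (Ioi_subset_Ioi hu)),
    add_sub_cancel_left]

lemma sum_cdf_sub_div_geometric_le (hF : ∀ x, F x = ∫ t in Ioc (0:ℝ) x, f t)
    (hf : IntegrableOn f (Ioi 0)) (hf0 : ∀ t ∈ Ioi (0:ℝ), 0 ≤ f t)
    (hg : IntegrableOn (fun t => 1 / t * f t) (Ioi 0)) {a r : ℝ} (ha : 0 < a) (hr : 1 ≤ r)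
    (K : ℕ) :
    ∑ i ∈ Finset.range K, (F (a * r ^ (i + 1)) - F (a * r ^ i)) / (a * r ^ i) ≤
      r * ∫ t in a..a * r ^ K, 1 / t * f t := by
  have hy : ∀ i : ℕ, 0 < a * r ^ i := fun i => by positivity
  have hint : ∀ {g : ℝ → ℝ}, IntegrableOn g (Ioi 0) → ∀ i : ℕ,
      IntervalIntegrable g volume (a * r ^ i) (a * r ^ (i + 1)) := fun hg i =>
    intervalIntegrable_of_integrableOn_Ioi_zero hg (hy i).le (hy (i + 1)).le
  calc _ ≤ ∑ i ∈ Finset.range K, r * ∫ t in a * r ^ i..a * r ^ (i + 1), 1 / t * f t := by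
        refine Finset.sum_le_sum fun i _ => ?_
        rw [cdf_sub_cdf hF hf (hy i).le (hy (i + 1)).le]
        exact intervalIntegral_div_le_mul_intervalIntegral_inv_mul (hy i)
          (by gcongr; exact i.le_succ) (le_of_eq (by ring))
          (fun t ht => hf0 t ((hy i).trans_le ht.1)) (hint hf i) (hint hg i)
    _ = r * ∫ t in a..a * r ^ K, 1 / t * f t := by
        rw [← Finset.mul_sum,
          intervalIntegral.sum_integral_adjacent_intervals fun i _ => hint hg i, pow_zero, mul_one]

end CDF

lemma sum_Icc_cells_eq_sum_range_add_tail (F : ℝ → ℝ) (y : ℕ → ℝ) {N : ℕ} (hN : 1 ≤ N) :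
    ∑ n ∈ Finset.Icc 1 N, ((if n = N then (1:ℝ) else F (y n)) - F (y (n - 1))) / y (n - 1) =
      ∑ i ∈ Finset.range (N - 1), (F (y (i + 1)) - F (y i)) / y i +
        (1 - F (y (N - 1))) / y (N - 1) := by
  obtain ⟨M, rfl⟩ := Nat.exists_eq_add_of_le' hN
  rw [Finset.sum_Icc_succ_top (by omega), if_pos rfl, Nat.add_sub_cancel,
    ← Finset.Ico_add_one_right_eq_Icc, Finset.sum_Ico_eq_sum_range, Nat.add_sub_cancel]
  congr 1
  refine Finset.sum_congr rfl fun i hi => ?_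
  rw [if_neg (by simp at hi; omega), Nat.add_sub_cancel_left, add_comm 1 i]

lemma logb_div_logb_eq_logb {b : ℝ} (hb : Real.log b ≠ 0) (x y : ℝ) :
    Real.logb b x / Real.logb b y = Real.logb y x :=
  div_div_div_cancel_right₀ hb _ _

lemma rpow_mul_logb {N L : ℝ} (hN : 0 < N) (hN1 : N ≠ 1) (hL : 0 < L) (c : ℝ) :
    N ^ (c * Real.logb N L) = L ^ c := by
  rw [mul_comm, Real.rpow_mul hN.le, Real.rpow_logb hN hN1 hL]

theorem stmt10_general
    (f F : ℝ → ℝ) (η a : ℝ) (ha : 0 < a)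
    (hfpos : ∀ x ∈ Ioi (0:ℝ), 0 < f x)
    (hfint : IntegrableOn f (Ioi 0))
    (hfone : ∫ x in Ioi (0:ℝ), f x = 1)
    (hmean : IntegrableOn (fun y : ℝ => y * f y) (Ioi 0))
    (hρint : IntegrableOn (fun y : ℝ => (1 / y) * f y) (Ioi 0))
    (hF : ∀ x, F x = ∫ t in Ioc (0:ℝ) x, f t)
    (N : ℕ) (hN : 2 ≤ N)
    (L : ℝ) (hLpos : 0 < L) (hLeq : L * (1 + L) ^ (N - 1) = η / a) :
    (∑ n ∈ Finset.Icc 1 N,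
        ((if n = N then (1:ℝ) else F (a * (1 + L) ^ n)) - F (a * (1 + L) ^ (n - 1))) /
          (a * (1 + L) ^ (n - 1))) <
      (∫ x in Ioi (0:ℝ), (1 / x) * f x) *
        (1 + (N : ℝ) ^ (-(-Real.logb 2 L / Real.logb 2 N)) +
          (∫ x in Ioi (0:ℝ), x * f x) / (η ^ 2 * ∫ x in Ioi (0:ℝ), (1 / x) * f x) *
            (N : ℝ) ^ (-2 * (-Real.logb 2 L / Real.logb 2 N))) := by
  set ρ := ∫ x in Ioi (0:ℝ), (1 / x) * f x
  set m := ∫ x in Ioi (0:ℝ), x * f x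
  have hf0 : ∀ t ∈ Ioi (0:ℝ), 0 ≤ f t := fun t ht => (hfpos t ht).le
  have hg0 : ∀ t ∈ Ioi (0:ℝ), 0 < 1 / t * f t := fun t ht =>
    mul_pos (one_div_pos.2 ht) (hfpos t ht)
  have hr : 1 ≤ 1 + L := by linarith
  have hlast : 0 < a * (1 + L) ^ (N - 1) := by positivity
  have hlast_eq : a * (1 + L) ^ (N - 1) = η / L := by
    have : L * (1 + L) ^ (N - 1) * a = η := by rw [hLeq, div_mul_cancel₀ _ ha.ne']
    rw [eq_div_iff hLpos.ne', ← this]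
    ring
  have hρ : 0 < ρ := by
    simpa only [intervalIntegral.integral_same] using
      intervalIntegral_lt_integral_Ioi_zero hρint hg0 ha le_rfl
  have hhead := (sum_cdf_sub_div_geometric_le hF hfint hf0 hρint ha hr (N - 1)).trans_lt
    (mul_lt_mul_of_pos_left (intervalIntegral_lt_integral_Ioi_zero hρint hg0 ha
      (le_mul_of_one_le_right ha.le (one_le_pow₀ hr))) (by linarith))
  have htail := setIntegral_Ioi_div_le_integral_mul_div_sq hf0 hfint hmean hlast
  rw [← one_sub_cdf hF hfint hfone hlast.le] at htail
  have hζ : -Real.logb 2 L / Real.logb 2 N = -Real.logb N L := by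
    rw [neg_div, logb_div_logb_eq_logb (Real.log_pos one_lt_two).ne']
  have hN1 : (1:ℝ) < N := by exact_mod_cast hN
  rw [sum_Icc_cells_eq_sum_range_add_tail F (fun n => a * (1 + L) ^ n) (by omega), hζ, neg_neg,
    neg_mul_neg, Real.rpow_logb (by positivity) hN1.ne' hLpos,
    rpow_mul_logb (by positivity) hN1.ne' hLpos, Real.rpow_two]
  calc _ < (1 + L) * ρ + m / (η / L) ^ 2 := by
        rw [← hlast_eq]; exact add_lt_add_of_lt_of_le hhead htail
    _ = ρ * (1 + L + m / (η ^ 2 * ρ) * L ^ 2) := by field_simp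

/-- Theorem 2: the normalized average power of the optimal uniform
(in dB) codebook `y n = a·(r*)^(n-1)`, `r* = 1 + L_{η/a}(N)`, is bounded by
`ρ·(1 + N^{−ζ} + ω·N^{−2ζ})` where `ρ = E[1/Y]`, `ω = m/(η²ρ)`. -/
theorem stmt10
    (f f' F : ℝ → ℝ) (η a : ℝ) (hη0 : 0 < η) (ha : 0 < a)
    (hfpos : ∀ x ∈ Ioi (0:ℝ), 0 < f x)
    (hfder : ∀ x ∈ Ioi (0:ℝ), HasDerivAt f (f' x) x)
    (hfint : IntegrableOn f (Ioi 0))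
    (hfone : ∫ x in Ioi (0:ℝ), f x = 1)
    (hηlim : Tendsto (fun y : ℝ => -f y / f' y) atTop (nhds η))
    (hmean : IntegrableOn (fun y : ℝ => y * f y) (Ioi 0))
    (hρint : IntegrableOn (fun y : ℝ => (1 / y) * f y) (Ioi 0))
    (hF : ∀ x, F x = ∫ t in Ioc (0:ℝ) x, f t)
    (N : ℕ) (hN : 2 ≤ N)
    (L : ℝ) (hLpos : 0 < L) (hLeq : L * (1 + L) ^ (N - 1) = η / a) :
    (∑ n ∈ Finset.Icc 1 N,
        ((if n = N then (1:ℝ) else F (a * (1 + L) ^ n)) - F (a * (1 + L) ^ (n - 1))) /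
          (a * (1 + L) ^ (n - 1))) <
      (∫ x in Ioi (0:ℝ), (1 / x) * f x) *
        (1 + (N : ℝ) ^ (-(-Real.logb 2 L / Real.logb 2 N)) +
          (∫ x in Ioi (0:ℝ), x * f x) / (η ^ 2 * ∫ x in Ioi (0:ℝ), (1 / x) * f x) *
            (N : ℝ) ^ (-2 * (-Real.logb 2 L / Real.logb 2 N))) :=
  stmt10_general f F η a ha hfpos hfint hfone hmean hρint hF N hN L hLpos hLeq
end
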